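/- Let α ∈ (0,2) and let U_ap(φ) = (2 cos φ)^(−α) + 2^(1−α/2)·(1 + sin² φ)^(−α/2) for φ ∈ (−π/2, π/2). Then the derivative of U_ap vanishes at a point φ ∈ (0, π/2) if and only if φ = arctan(1/√2). In particular, φ̂ = arctan(1/√2) is a critical point of U_ap for every α ∈ (0,2). -/

import Mathlib

open Real

/-! With `u = 4 cos² φ` and `v = 2 + 2 sin² φ` the potential `U_ap` is `u ^ (-α/2) + 2 v ^ (-α/2)`
wherever `cos φ ≥ 0`, so `U_ap' φ = 4 α sin φ cos φ (u ^ (-α/2 - 1) - v ^ (-α/2 - 1))`.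
On `(0, π/2)` this vanishes exactly when `u = v`, i.e. `tan² φ = 1/2`. -/

noncomputable def tetrahedralPotential (α φ : ℝ) : ℝ :=
  (2 * cos φ) ^ (-α) + (2:ℝ) ^ (1 - α/2) * (1 + sin φ ^ 2) ^ (-(α/2))

lemma tetrahedralPotential_eq (α : ℝ) {φ : ℝ} (hc : 0 ≤ cos φ) :
    tetrahedralPotential α φ =
      (4 * cos φ ^ 2) ^ (-(α/2)) + 2 * (2 + 2 * sin φ ^ 2) ^ (-(α/2)) := by
  have h₁ : (2 * cos φ) ^ (-α) = (4 * cos φ ^ 2) ^ (-(α/2)) := by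
    rw [show -α = (2:ℕ) * -(α/2) by push_cast; ring, rpow_natCast_mul (by positivity)]
    ring_nf
  have h₂ : (2:ℝ) ^ (1 - α/2) = 2 * 2 ^ (-(α/2)) := by
    rw [sub_eq_add_neg, rpow_add two_pos, rpow_one]
  rw [tetrahedralPotential, h₁, h₂, mul_assoc, ← mul_rpow zero_le_two (by positivity)]
  ring_nf

lemma hasDerivAt_tetrahedralPotential (α : ℝ) {φ : ℝ} (hc : 0 < cos φ) :
    HasDerivAt (tetrahedralPotential α)
      (4 * α * sin φ * cos φ *
        ((4 * cos φ ^ 2) ^ (-(α/2) - 1) - (2 + 2 * sin φ ^ 2) ^ (-(α/2) - 1))) φ := by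
  have hu : HasDerivAt (fun φ => 4 * cos φ ^ 2) (4 * (2 * cos φ * -sin φ)) φ := by
    simpa using ((hasDerivAt_cos φ).pow 2).const_mul 4
  have hv : HasDerivAt (fun φ => 2 + 2 * sin φ ^ 2) (2 * (2 * sin φ * cos φ)) φ := by
    simpa using (((hasDerivAt_sin φ).pow 2).const_mul 2).const_add 2
  have hU := (hu.rpow_const (p := -(α/2)) (Or.inl (by positivity))).add
    ((hv.rpow_const (p := -(α/2)) (Or.inl (by positivity))).const_mul 2)
  have hEq : (fun φ => (4 * cos φ ^ 2) ^ (-(α/2)) + 2 * (2 + 2 * sin φ ^ 2) ^ (-(α/2)))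
      =ᶠ[nhds φ] tetrahedralPotential α := by
    filter_upwards [continuousAt_const.eventually_lt continuous_cos.continuousAt hc] with ψ hψ
    exact (tetrahedralPotential_eq α hψ.le).symm
  exact (hU.congr_of_eventuallyEq hEq.symm).congr_deriv (by ring)

lemma eq_arctan_inv_sqrt_two_iff {φ : ℝ} (hφ : φ ∈ Set.Ioo 0 (π/2)) :
    φ = arctan (1 / √2) ↔ 4 * cos φ ^ 2 = 2 + 2 * sin φ ^ 2 := by
  have hc : 0 < cos φ := cos_pos_of_mem_Ioo ⟨by linarith [hφ.1, pi_pos], hφ.2⟩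
  have ht : 0 < tan φ := tan_pos_of_pos_of_lt_pi_div_two hφ.1 hφ.2
  calc φ = arctan (1 / √2) ↔ tan φ = 1 / √2 := by
        refine ⟨fun h => h ▸ tan_arctan _, fun h => ?_⟩
        exact (arctan_eq_of_tan_eq h ⟨by linarith [hφ.1, pi_pos], hφ.2⟩).symm
    _ ↔ tan φ ^ 2 = 1 / 2 := by
        rw [← sq_eq_sq₀ ht.le (by positivity), div_pow, sq_sqrt zero_le_two, one_pow]
    _ ↔ 4 * cos φ ^ 2 = 2 + 2 * sin φ ^ 2 := by
        rw [tan_eq_sin_div_cos, div_pow, div_eq_iff (by positivity)]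
        constructor <;> intro h <;> nlinarith [sin_sq_add_cos_sq φ]

lemma deriv_tetrahedralPotential_eq_zero_iff {α : ℝ} (hα₀ : α ≠ 0) (hα₂ : α ≠ -2) {φ : ℝ}
    (hφ : φ ∈ Set.Ioo 0 (π/2)) :
    deriv (tetrahedralPotential α) φ = 0 ↔ φ = arctan (1 / √2) := by
  have hc : 0 < cos φ := cos_pos_of_mem_Ioo ⟨by linarith [hφ.1, pi_pos], hφ.2⟩
  have hs : 0 < sin φ := sin_pos_of_pos_of_lt_pi hφ.1 (by linarith [hφ.2, pi_pos])
  rw [(hasDerivAt_tetrahedralPotential α hc).deriv, eq_arctan_inv_sqrt_two_iff hφ,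
    mul_eq_zero, sub_eq_zero, rpow_left_inj (by positivity) (by positivity) (by contrapose! hα₂; linarith)]
  simp [hα₀, hs.ne', hc.ne']

lemma arctan_inv_sqrt_two_mem_Ioo : arctan (1 / √2) ∈ Set.Ioo 0 (π/2) :=
  ⟨arctan_pos.2 (by positivity), arctan_lt_pi_div_two _⟩

theorem tetrahedral_central_configuration_unique
    (α : ℝ) (hα : α ∈ Set.Ioo (0:ℝ) 2) :
    (∀ φ ∈ Set.Ioo (0:ℝ) (π/2),
      (deriv (fun φ : ℝ =>
          (2 * Real.cos φ) ^ (-α) + (2:ℝ) ^ (1 - α/2) * (1 + Real.sin φ ^ 2) ^ (-(α/2))) φ = 0 ↔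
        φ = Real.arctan (1 / Real.sqrt 2))) ∧
    deriv (fun φ : ℝ =>
        (2 * Real.cos φ) ^ (-α) + (2:ℝ) ^ (1 - α/2) * (1 + Real.sin φ ^ 2) ^ (-(α/2)))
      (Real.arctan (1 / Real.sqrt 2)) = 0 := by
  have hcrit : ∀ φ ∈ Set.Ioo (0:ℝ) (π/2),
      deriv (tetrahedralPotential α) φ = 0 ↔ φ = arctan (1 / √2) := fun _ hφ =>
    deriv_tetrahedralPotential_eq_zero_iff hα.1.ne' (by linarith [hα.1]) hφ
  exact ⟨hcrit, (hcrit _ arctan_inv_sqrt_two_mem_Ioo).2 rfl⟩
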